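/- Let G be a finite simple weighted graph on n vertices with maximal edge weight a. List the eigenvalues of its Laplacian in nondecreasing order λ₁(G) ≤ … ≤ λ_n(G) and its degrees in nondecreasing order d₁(G) ≤ … ≤ d_n(G). Then for every m ∈ {2,…,n}: d_m(G) − Δ(G_{l_m}) ≤ λ_m(G) ≤ d_{m−1}(G) + (m−1)·a − δ(G_{s_{m−1}}). -/

import Mathlib

open Matrix

/-- The (weighted) degree of vertex `v` in the weighted graph with adjacency
matrix `A`. -/
def wdeg {n : ℕ} (A : Matrix (Fin n) (Fin n) ℝ) (v : Fin n) : ℝ := ∑ u, A v u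

/-- The Laplacian matrix `L = diag(deg) - A` of a weighted graph. -/
def lap {n : ℕ} (A : Matrix (Fin n) (Fin n) ℝ) : Matrix (Fin n) (Fin n) ℝ :=
  Matrix.diagonal (wdeg A) - A

/-- `Δ(G_{l_{k+1}})` (1-based `m = k + 1`): the maximum degree of the subgraph of
`G` induced by the highest-degree vertices `σ k, σ (k+1), …, σ (n-1)`, where `σ`
sorts the vertices by nondecreasing degree. -/
noncomputable def maxDegTop {n : ℕ} (A : Matrix (Fin n) (Fin n) ℝ)
    (σ : Equiv.Perm (Fin n)) (k : Fin n) : ℝ :=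
  (Finset.Ici k).sup' ⟨k, Finset.mem_Ici.mpr le_rfl⟩
    fun j => ∑ j' ∈ Finset.Ici k, A (σ j) (σ j')

/-- `δ(G_{s_{k+1}})` (1-based `m = k + 1`): the minimum degree of the subgraph of
`G` induced by the lowest-degree vertices `σ 0, σ 1, …, σ k`, where `σ` sorts the
vertices by nondecreasing degree. -/
noncomputable def minDegBot {n : ℕ} (A : Matrix (Fin n) (Fin n) ℝ)
    (σ : Equiv.Perm (Fin n)) (k : Fin n) : ℝ :=
  (Finset.Iic k).inf' ⟨k, Finset.mem_Iic.mpr le_rfl⟩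
    fun j => ∑ j' ∈ Finset.Iic k, A (σ j) (σ j')

/-- `a(G)`: the maximal edge weight of the weighted graph `G`. -/
noncomputable def maxWeight {n : ℕ} (hn : 0 < n)
    (A : Matrix (Fin n) (Fin n) ℝ) : ℝ :=
  Finset.univ.sup' (Finset.univ_nonempty_iff.mpr ⟨(⟨0, hn⟩, ⟨0, hn⟩)⟩)
    fun p : Fin n × Fin n => A p.1 p.2

lemma lap_form {n : ℕ} (A : Matrix (Fin n) (Fin n) ℝ) (x : Fin n → ℝ) :
    x ⬝ᵥ (lap A).mulVec x
      = (∑ i, wdeg A i * x i ^ 2) - ∑ i, ∑ j, A i j * (x i * x j) := by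
  simp only [dotProduct, mulVec, dotProduct, lap, Matrix.sub_apply, diagonal_apply,
    Finset.mul_sum, sub_mul, mul_sub, ite_mul, zero_mul, mul_ite, mul_zero,
    Finset.sum_sub_distrib, Finset.sum_ite_eq, Finset.mem_univ, if_true]
  congr 1
  · exact Finset.sum_congr rfl fun i _ => by ring
  · exact Finset.sum_congr rfl fun i _ => Finset.sum_congr rfl fun j _ => by ring

lemma dsum_expand {n : ℕ} (A : Matrix (Fin n) (Fin n) ℝ) (T : Finset (Fin n)) (y : Fin n → ℝ) :
    ∑ i ∈ T, ∑ j ∈ T, A i j * (y i - y j) ^ 2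
      = ((∑ i ∈ T, ∑ j ∈ T, A i j * y i ^ 2) + ∑ i ∈ T, ∑ j ∈ T, A i j * y j ^ 2)
        - 2 * ∑ i ∈ T, ∑ j ∈ T, A i j * (y i * y j) := by
  rw [Finset.mul_sum, ← Finset.sum_add_distrib, ← Finset.sum_sub_distrib]
  refine Finset.sum_congr rfl fun i _ => ?_
  rw [Finset.mul_sum, ← Finset.sum_add_distrib, ← Finset.sum_sub_distrib]
  exact Finset.sum_congr rfl fun j _ => by ring

lemma offdiag_le {n : ℕ} (A : Matrix (Fin n) (Fin n) ℝ) (hsymm : A.IsSymm)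
    (hnonneg : ∀ u v, 0 ≤ A u v) (T : Finset (Fin n)) (y : Fin n → ℝ) :
    ∑ i ∈ T, ∑ j ∈ T, A i j * (y i * y j) ≤ ∑ i ∈ T, ∑ j ∈ T, A i j * y i ^ 2 := by
  have hswap : ∑ i ∈ T, ∑ j ∈ T, A i j * y j ^ 2 = ∑ i ∈ T, ∑ j ∈ T, A i j * y i ^ 2 := by
    rw [Finset.sum_comm]
    exact Finset.sum_congr rfl fun i _ => Finset.sum_congr rfl fun j _ => by
      rw [hsymm.apply]
  have h2 : (0:ℝ) ≤ ∑ i ∈ T, ∑ j ∈ T, A i j * (y i - y j) ^ 2 :=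
    Finset.sum_nonneg fun i _ => Finset.sum_nonneg fun j _ =>
      mul_nonneg (hnonneg i j) (sq_nonneg _)
  rw [dsum_expand, hswap] at h2
  linarith

lemma form_ge {n : ℕ} (A : Matrix (Fin n) (Fin n) ℝ) (hsymm : A.IsSymm)
    (hnonneg : ∀ u v, 0 ≤ A u v) (T : Finset (Fin n)) (y : Fin n → ℝ)
    (hy : ∀ i, i ∉ T → y i = 0) (c : ℝ)
    (hc : ∀ i ∈ T, c ≤ wdeg A i - ∑ j ∈ T, A i j) :
    c * ∑ i, y i ^ 2 ≤ y ⬝ᵥ (lap A).mulVec y := by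
  rw [lap_form]
  have e1 : ∑ i, y i ^ 2 = ∑ i ∈ T, y i ^ 2 :=
    (Finset.sum_subset T.subset_univ (fun i _ hi => by rw [hy i hi]; ring)).symm
  have e2 : ∑ i, wdeg A i * y i ^ 2 = ∑ i ∈ T, wdeg A i * y i ^ 2 :=
    (Finset.sum_subset T.subset_univ (fun i _ hi => by rw [hy i hi]; ring)).symm
  have e3 : ∑ i, ∑ j, A i j * (y i * y j) = ∑ i ∈ T, ∑ j ∈ T, A i j * (y i * y j) := by
    rw [← Finset.sum_subset T.subset_univ
      (fun i _ hi => by simp [hy i hi])]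
    exact Finset.sum_congr rfl fun i _ =>
      (Finset.sum_subset T.subset_univ (fun j _ hj => by rw [hy j hj]; ring)).symm
  rw [e1, e2, e3, Finset.mul_sum]
  have h1 : ∑ i ∈ T, c * y i ^ 2
      ≤ ∑ i ∈ T, (wdeg A i - ∑ j ∈ T, A i j) * y i ^ 2 :=
    Finset.sum_le_sum fun i hi => mul_le_mul_of_nonneg_right (hc i hi) (sq_nonneg _)
  have h2 := offdiag_le A hsymm hnonneg T y
  have h3 : ∑ i ∈ T, (wdeg A i - ∑ j ∈ T, A i j) * y i ^ 2
      = (∑ i ∈ T, wdeg A i * y i ^ 2) - ∑ i ∈ T, ∑ j ∈ T, A i j * y i ^ 2 := by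
    rw [← Finset.sum_sub_distrib]
    exact Finset.sum_congr rfl fun i _ => by rw [sub_mul, Finset.sum_mul]
  linarith

noncomputable def compA {n : ℕ} (a : ℝ) (A : Matrix (Fin n) (Fin n) ℝ) :
    Matrix (Fin n) (Fin n) ℝ := fun i j => if i = j then 0 else a - A i j

lemma compA_symm {n : ℕ} (a : ℝ) {A : Matrix (Fin n) (Fin n) ℝ} (h : A.IsSymm) :
    (compA a A).IsSymm := by
  rw [Matrix.IsSymm] at *
  ext i j
  simp only [Matrix.transpose_apply, compA]
  by_cases hij : i = j
  · simp [hij]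
  · have := congrFun (congrFun h j) i
    simp only [Matrix.transpose_apply] at this
    simp [hij, Ne.symm hij, this]

lemma compA_nonneg {n : ℕ} {a : ℝ} {A : Matrix (Fin n) (Fin n) ℝ}
    (ha : ∀ i j, A i j ≤ a) (i j : Fin n) : 0 ≤ compA a A i j := by
  unfold compA
  by_cases h : i = j
  · simp [h]
  · simp [h, ha i j]

lemma comp_row_sum {n : ℕ} (a : ℝ) (A : Matrix (Fin n) (Fin n) ℝ)
    (hdiag : ∀ v, A v v = 0) (T : Finset (Fin n)) (i : Fin n) (hi : i ∈ T) :
    ∑ j ∈ T, compA a A i j = a * (T.card - 1) - ∑ j ∈ T, A i j := by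
  have e : ∀ j ∈ T, compA a A i j = (a - A i j) - (if i = j then a else 0) := by
    intro j _
    by_cases h : i = j
    · subst h; simp [compA, hdiag]
    · simp [compA, h]
  rw [Finset.sum_congr rfl e, Finset.sum_sub_distrib, Finset.sum_sub_distrib,
    Finset.sum_ite_eq, if_pos hi, Finset.sum_const, nsmul_eq_mul]
  ring

lemma form_comp {n : ℕ} (a : ℝ) (A : Matrix (Fin n) (Fin n) ℝ)
    (hdiag : ∀ v, A v v = 0) (y : Fin n → ℝ) :
    y ⬝ᵥ (lap A).mulVec y + y ⬝ᵥ (lap (compA a A)).mulVec y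
      = a * n * (∑ i, y i ^ 2) - a * (∑ i, y i) ^ 2 := by
  rw [lap_form, lap_form]
  have h1 : ∀ i : Fin n, wdeg (compA a A) i = a * ((n : ℝ) - 1) - wdeg A i := by
    intro i
    have := comp_row_sum a A hdiag Finset.univ i (Finset.mem_univ i)
    simpa [wdeg, Finset.card_univ] using this
  have hA2 : ∑ i, ∑ j, compA a A i j * (y i * y j)
      = a * (∑ i, y i) ^ 2 - a * (∑ i, y i ^ 2) - ∑ i, ∑ j, A i j * (y i * y j) := by
    have e : ∀ i j : Fin n, compA a A i j * (y i * y j)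
        = a * (y i * y j) - A i j * (y i * y j) - (if i = j then a * (y j * y j) else 0) := by
      intro i j
      by_cases h : i = j
      · subst h; simp [compA, hdiag]
      · simp [compA, h]; ring
    simp_rw [e, Finset.sum_sub_distrib, Finset.sum_ite_eq, Finset.mem_univ, if_true]
    have hsq : ∑ i : Fin n, ∑ j : Fin n, a * (y i * y j) = a * (∑ i, y i) ^ 2 := by
      rw [sq, Finset.sum_mul_sum, Finset.mul_sum]
      exact Finset.sum_congr rfl fun i _ => by rw [Finset.mul_sum]
    rw [hsq]
    have hdg : ∑ i : Fin n, a * (y i * y i) = a * ∑ i, y i ^ 2 := by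
      rw [Finset.mul_sum]
      exact Finset.sum_congr rfl fun i _ => by ring
    rw [hdg]
    ring
  have h1s : ∑ i, wdeg (compA a A) i * y i ^ 2
      = a * ((n : ℝ) - 1) * (∑ i, y i ^ 2) - ∑ i, wdeg A i * y i ^ 2 := by
    simp_rw [h1, sub_mul, Finset.sum_sub_distrib, Finset.mul_sum]
  rw [hA2, h1s]
  ring

lemma euclid_sum_apply {n : ℕ} (c : Fin n → ℝ) (v : Fin n → EuclideanSpace ℝ (Fin n)) (j : Fin n) :
    (∑ i, c i • v i) j = ∑ i, c i * v i j := by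
  show (WithLp.linearEquiv 2 ℝ (Fin n → ℝ) (∑ i, c i • v i)) j = _
  rw [map_sum]
  simp [Finset.sum_apply, WithLp.linearEquiv_apply]

section spec
variable {n : ℕ} {M : Matrix (Fin n) (Fin n) ℝ} (hM : M.IsHermitian)

lemma inner_coord (x : EuclideanSpace ℝ (Fin n)) (i : Fin n) :
    ∑ k, hM.eigenvectorBasis i k * x k = hM.eigenvectorBasis.repr x i := by
  have h := hM.eigenvectorBasis.repr_apply_apply x i
  rw [h, PiLp.inner_apply]
  simp [RCLike.inner_apply, conj_trivial]
  exact Finset.sum_congr rfl fun _ _ => mul_comm _ _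

lemma coord_expand (x : EuclideanSpace ℝ (Fin n)) (j : Fin n) :
    x j = ∑ i, hM.eigenvectorBasis.repr x i * hM.eigenvectorBasis i j := by
  conv_lhs => rw [← hM.eigenvectorBasis.sum_repr x]
  exact euclid_sum_apply _ _ j

lemma rayleigh_repr (x : EuclideanSpace ℝ (Fin n)) :
    x ⬝ᵥ M.mulVec x
      = ∑ i, hM.eigenvalues i * (hM.eigenvectorBasis.repr x i) ^ 2 := by
  set B := hM.eigenvectorBasis with hB
  set c : Fin n → ℝ := fun i => B.repr x i with hc
  have key : ∀ i k, M.mulVec (B i) k = hM.eigenvalues i * B i k := by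
    intro i k
    have := congrFun (hM.mulVec_eigenvectorBasis i) k
    simpa using this
  have h1 : M.mulVec x = fun k => ∑ i, c i * (hM.eigenvalues i * B i k) := by
    funext k
    show ∑ j, M k j * x j = _
    calc ∑ j, M k j * x j
        = ∑ j, ∑ i, c i * (M k j * B i j) := by
          refine Finset.sum_congr rfl fun j _ => ?_
          rw [coord_expand hM x j, Finset.mul_sum]
          exact Finset.sum_congr rfl fun i _ => by ring
      _ = ∑ i, ∑ j, c i * (M k j * B i j) := Finset.sum_comm
      _ = ∑ i, c i * (hM.eigenvalues i * B i k) := by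
          refine Finset.sum_congr rfl fun i _ => ?_
          rw [← Finset.mul_sum]
          congr 1
          exact key i k
  calc x ⬝ᵥ M.mulVec x
      = ∑ k, x k * ∑ i, c i * (hM.eigenvalues i * B i k) := by
        simp only [dotProduct, h1]
    _ = ∑ i, ∑ k, (c i * hM.eigenvalues i) * (B i k * x k) := by
        rw [Finset.sum_comm]
        exact Finset.sum_congr rfl fun k _ => by
          rw [Finset.mul_sum]; exact Finset.sum_congr rfl fun i _ => by ring
    _ = ∑ i, hM.eigenvalues i * c i ^ 2 := by
        refine Finset.sum_congr rfl fun i _ => ?_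
        rw [← Finset.mul_sum, inner_coord hM x i]
        show c i * hM.eigenvalues i * c i = hM.eigenvalues i * c i ^ 2
        ring

lemma parseval (x : EuclideanSpace ℝ (Fin n)) :
    ∑ i, x i ^ 2 = ∑ i, (hM.eigenvectorBasis.repr x i) ^ 2 := by
  set B := hM.eigenvectorBasis
  have h := B.repr.inner_map_map x x
  rw [PiLp.inner_apply, PiLp.inner_apply] at h
  simp only [RCLike.inner_apply, conj_trivial] at h
  calc ∑ i, x i ^ 2 = ∑ i, x i * x i := by
        exact Finset.sum_congr rfl fun i _ => by ring
    _ = ∑ i, B.repr x i * B.repr x i := h.symm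
    _ = ∑ i, (B.repr x i) ^ 2 := Finset.sum_congr rfl fun i _ => (sq _).symm

lemma repr_vanish (s : Finset (Fin n)) (x : EuclideanSpace ℝ (Fin n))
    (hx : x ∈ Submodule.span ℝ (hM.eigenvectorBasis '' ↑s)) (j : Fin n) (hj : j ∉ s) :
    hM.eigenvectorBasis.repr x j = 0 := by
  set B := hM.eigenvectorBasis
  refine Submodule.span_induction ?_ ?_ ?_ ?_ hx
  · rintro y ⟨i, hi, rfl⟩
    rw [B.repr_self]
    have : i ≠ j := fun h => hj (h ▸ hi)
    simp [EuclideanSpace.single_apply, this.symm]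
  · simp
  · intro y z _ _ hy hz
    rw [map_add]
    simp [hy, hz]
  · intro a y _ hy
    rw [_root_.map_smul]
    simp [hy]

end spec


section more
variable {n : ℕ} (A : Matrix (Fin n) (Fin n) ℝ)

lemma lap_mulVec_ones : (lap A).mulVec (fun _ => (1:ℝ)) = 0 := by
  funext k
  simp only [mulVec, dotProduct, lap, Matrix.sub_apply, diagonal_apply, mul_one,
    Finset.sum_sub_distrib, Finset.sum_ite_eq, Finset.mem_univ, if_true]
  show wdeg A k - ∑ j, A k j = 0
  rw [wdeg]; ring

lemma lap_symm_entry (hsymm : A.IsSymm) (i j : Fin n) : lap A i j = lap A j i := by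
  have h := congrFun (congrFun hsymm j) i
  simp only [Matrix.transpose_apply] at h
  by_cases hij : i = j
  · rw [hij]
  · simp [lap, Matrix.sub_apply, diagonal_apply, hij, Ne.symm hij, h]

lemma ones_dot_lap (hsymm : A.IsSymm) (y : Fin n → ℝ) :
    (fun _ => (1:ℝ)) ⬝ᵥ (lap A).mulVec y = 0 := by
  simp only [dotProduct, mulVec, one_mul]
  rw [Finset.sum_comm]
  have : ∀ j, ∑ k, lap A k j * y j = 0 := by
    intro j
    rw [← Finset.sum_mul]
    have hcol : ∑ k, lap A k j = 0 := by
      have := congrFun (lap_mulVec_ones A) j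
      simp only [mulVec, dotProduct, mul_one, Pi.zero_apply] at this
      rw [← this]
      exact Finset.sum_congr rfl fun k _ => (lap_symm_entry A hsymm j k).symm
    rw [hcol, zero_mul]
  calc ∑ j, ∑ k, (fun k => lap A k j * y j) k = ∑ j, (0:ℝ) := Finset.sum_congr rfl fun j _ => this j
    _ = 0 := Finset.sum_const_zero

lemma lap_shift (hsymm : A.IsSymm) (y : Fin n → ℝ) (c : ℝ) :
    (fun i => y i + c) ⬝ᵥ (lap A).mulVec (fun i => y i + c) = y ⬝ᵥ (lap A).mulVec y := by
  have hdecomp : (fun i => y i + c) = y + c • (fun _ => (1:ℝ)) := by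
    funext i; simp
  rw [hdecomp, mulVec_add, mulVec_smul, lap_mulVec_ones A, smul_zero, add_zero,
    add_dotProduct, smul_dotProduct, ones_dot_lap A hsymm, smul_zero, add_zero]

end more

lemma sum_shift_sq {n : ℕ} (y : Fin n → ℝ) (c : ℝ) :
    ∑ i, (y i + c) ^ 2 = (∑ i, y i ^ 2) + 2 * c * (∑ i, y i) + n * c ^ 2 := by
  have hterm : ∀ i ∈ Finset.univ, (y i + c) ^ 2 = y i ^ 2 + 2 * c * y i + c ^ 2 :=
    fun i _ => by ring
  rw [Finset.sum_congr rfl hterm, Finset.sum_add_distrib, Finset.sum_add_distrib,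
    ← Finset.mul_sum, Finset.sum_const, Finset.card_univ, Fintype.card_fin, nsmul_eq_mul]

lemma form_upper {n : ℕ} (hn : 0 < n) (A : Matrix (Fin n) (Fin n) ℝ) (hsymm : A.IsSymm)
    (hnonneg : ∀ u v, 0 ≤ A u v) (hdiag : ∀ v, A v v = 0)
    (a : ℝ) (haA : ∀ i j, A i j ≤ a)
    (T : Finset (Fin n)) (y : Fin n → ℝ) (hy : ∀ i, i ∉ T → y i = 0)
    (c B : ℝ) (hB0 : 0 ≤ B)
    (hB : ∀ i ∈ T, wdeg A i + a * T.card - ∑ j ∈ T, A i j ≤ B) :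
    (fun i => y i + c) ⬝ᵥ (lap A).mulVec (fun i => y i + c)
      ≤ B * ∑ i, (y i + c) ^ 2 := by
  rw [lap_shift A hsymm]
  set X := y ⬝ᵥ (lap A).mulVec y with hX
  set Y := y ⬝ᵥ (lap (compA a A)).mulVec y with hY
  set s := ∑ i, y i with hs
  set P := ∑ i, y i ^ 2 with hP
  have hQ : s ^ 2 ≤ (n : ℝ) * P := by
    have := sq_sum_le_card_mul_sum_sq (s := Finset.univ) (f := y)
    simpa using this
  have hcomp : X + Y = a * n * P - a * s ^ 2 := form_comp a A hdiag y
  have hYnn : 0 ≤ Y := by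
    have h0 := form_ge (compA a A) (compA_symm a hsymm) (compA_nonneg haA)
      Finset.univ y (fun i hi => absurd (Finset.mem_univ i) hi) 0
      (fun i _ => by rw [wdeg]; simp)
    simpa using h0
  have hkey : (a * n - B) * ((n : ℝ) * P - s ^ 2) ≤ (n : ℝ) * Y := by
    rcases le_or_gt (a * ↑n - B) 0 with h | h
    · have h1 : (0:ℝ) ≤ (n:ℝ) * P - s ^ 2 := by linarith
      have h2 : (a * ↑n - B) * ((n:ℝ) * P - s ^ 2) ≤ 0 := mul_nonpos_of_nonpos_of_nonneg h h1
      have h3 : (0:ℝ) ≤ (n:ℝ) * Y := mul_nonneg (by positivity) hYnn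
      linarith
    · have hc2 : (a * ↑n - B) * P ≤ Y := by
        refine form_ge (compA a A) (compA_symm a hsymm) (compA_nonneg haA) T y hy _ ?_
        intro i hi
        have hw : wdeg (compA a A) i = a * ((n : ℝ) - 1) - wdeg A i := by
          have := comp_row_sum a A hdiag Finset.univ i (Finset.mem_univ i)
          simpa [wdeg, Finset.card_univ] using this
        have hr : ∑ j ∈ T, compA a A i j = a * ((T.card : ℝ) - 1) - ∑ j ∈ T, A i j :=
          comp_row_sum a A hdiag T i hi
        have := hB i hi
        rw [hw, hr]
        linarith
      have hPnn : 0 ≤ P := Finset.sum_nonneg fun i _ => sq_nonneg _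
      calc (a * ↑n - B) * ((n:ℝ) * P - s ^ 2)
          ≤ (a * ↑n - B) * ((n:ℝ) * P) := by nlinarith [sq_nonneg s]
        _ = (n : ℝ) * ((a * ↑n - B) * P) := by ring
        _ ≤ (n : ℝ) * Y := by
            have : (0:ℝ) ≤ (n:ℝ) := by positivity
            exact mul_le_mul_of_nonneg_left hc2 this
  set W := ∑ i, (y i + c) ^ 2 with hW
  have hwexp : W = P + 2 * c * s + n * c ^ 2 := sum_shift_sq y c
  have hw2 : (n : ℝ) * P - s ^ 2 ≤ (n : ℝ) * W := by
    rw [hwexp]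
    nlinarith [sq_nonneg ((n:ℝ) * c + s)]
  have e1 : (n : ℝ) * X = a * ↑n * ((n:ℝ) * P - s ^ 2) - (n : ℝ) * Y := by
    linear_combination (n : ℝ) * hcomp
  have e3 : B * ((n:ℝ) * P - s ^ 2) ≤ B * ((n : ℝ) * W) := mul_le_mul_of_nonneg_left hw2 hB0
  have final : (n : ℝ) * X ≤ (n : ℝ) * (B * W) := by nlinarith [hkey, e3]
  have hnpos : (0:ℝ) < n := by positivity
  exact le_of_mul_le_mul_left final hnpos

section spec2
variable {n : ℕ} {M : Matrix (Fin n) (Fin n) ℝ} (hM : M.IsHermitian)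

lemma rayleigh_le_span (s : Finset (Fin n)) (c : ℝ)
    (hc : ∀ i ∈ s, hM.eigenvalues i ≤ c) (x : EuclideanSpace ℝ (Fin n))
    (hx : x ∈ Submodule.span ℝ (hM.eigenvectorBasis '' ↑s)) :
    x ⬝ᵥ M.mulVec x ≤ c * ∑ i, x i ^ 2 := by
  rw [rayleigh_repr hM, parseval hM, Finset.mul_sum]
  refine Finset.sum_le_sum fun i _ => ?_
  by_cases h : i ∈ s
  · exact mul_le_mul_of_nonneg_right (hc i h) (sq_nonneg _)
  · rw [repr_vanish hM s x hx i h]; simp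

lemma rayleigh_ge_span (s : Finset (Fin n)) (c : ℝ)
    (hc : ∀ i ∈ s, c ≤ hM.eigenvalues i) (x : EuclideanSpace ℝ (Fin n))
    (hx : x ∈ Submodule.span ℝ (hM.eigenvectorBasis '' ↑s)) :
    c * ∑ i, x i ^ 2 ≤ x ⬝ᵥ M.mulVec x := by
  rw [rayleigh_repr hM, parseval hM, Finset.mul_sum]
  refine Finset.sum_le_sum fun i _ => ?_
  by_cases h : i ∈ s
  · exact mul_le_mul_of_nonneg_right (hc i h) (sq_nonneg _)
  · rw [repr_vanish hM s x hx i h]; simp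

lemma span_eigen_finrank (s : Finset (Fin n)) :
    Module.finrank ℝ (Submodule.span ℝ (hM.eigenvectorBasis '' ↑s)) = s.card := by
  have ho : Orthonormal ℝ (fun i : ↥(↑s : Set (Fin n)) => hM.eigenvectorBasis i) :=
    hM.eigenvectorBasis.orthonormal.comp _ Subtype.val_injective
  rw [Set.image_eq_range, finrank_span_eq_card ho.linearIndependent]
  simp

end spec2

def suppSub {n : ℕ} (S : Finset (Fin n)) : Submodule ℝ (EuclideanSpace ℝ (Fin n)) where
  carrier := {x | ∀ i, i ∉ S → x i = 0}
  add_mem' := fun {a b} ha hb i hi => by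
    show a i + b i = 0
    rw [ha i hi, hb i hi, add_zero]
  zero_mem' := fun i _ => rfl
  smul_mem' := fun c x hx i hi => by
    show c * x i = 0
    rw [hx i hi, mul_zero]

lemma mem_suppSub {n : ℕ} {S : Finset (Fin n)} {x : EuclideanSpace ℝ (Fin n)} :
    x ∈ suppSub S ↔ ∀ i, i ∉ S → x i = 0 := Iff.rfl

lemma suppSub_card_le {n : ℕ} (S : Finset (Fin n)) :
    S.card ≤ Module.finrank ℝ (suppSub S) := by
  let F : (↥S → ℝ) →ₗ[ℝ] EuclideanSpace ℝ (Fin n) :=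
    { toFun := fun f => (WithLp.toLp 2 (fun i => if h : i ∈ S then f ⟨i, h⟩ else 0) : EuclideanSpace ℝ (Fin n))
      map_add' := fun f g => by
        ext i
        show (if h : i ∈ S then (f + g) ⟨i, h⟩ else 0)
          = (if h : i ∈ S then f ⟨i, h⟩ else 0) + (if h : i ∈ S then g ⟨i, h⟩ else 0)
        by_cases h : i ∈ S <;> simp [h]
      map_smul' := fun c f => by
        ext i
        show (if h : i ∈ S then (c • f) ⟨i, h⟩ else 0)
          = c * (if h : i ∈ S then f ⟨i, h⟩ else 0)
        by_cases h : i ∈ S <;> simp [h] }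
  have hrange : ∀ f, F f ∈ suppSub S := by
    intro f i hi
    show (if h : i ∈ S then f ⟨i, h⟩ else 0) = 0
    rw [dif_neg hi]
  let G : (↥S → ℝ) →ₗ[ℝ] ↥(suppSub S) := F.codRestrict (suppSub S) hrange
  have hinj : Function.Injective G := by
    intro f g hfg
    funext v
    have h1 := congrArg (fun z : ↥(suppSub S) => (z : EuclideanSpace ℝ (Fin n)) (v : Fin n)) hfg
    have h2 : (if h : (v : Fin n) ∈ S then f ⟨v, h⟩ else 0)
        = (if h : (v : Fin n) ∈ S then g ⟨v, h⟩ else 0) := h1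
    rw [dif_pos v.2, dif_pos v.2] at h2
    simpa using h2
  have hle := LinearMap.finrank_le_finrank_of_injective hinj
  rwa [Module.finrank_fintype_fun_eq_card, Fintype.card_coe] at hle

lemma exists_ne_zero_mem_inf {n : ℕ} (U V : Submodule ℝ (EuclideanSpace ℝ (Fin n)))
    (h : n < Module.finrank ℝ U + Module.finrank ℝ V) :
    ∃ x : EuclideanSpace ℝ (Fin n), x ∈ U ⊓ V ∧ x ≠ 0 := by
  have hsum := Submodule.finrank_sup_add_finrank_inf_eq U V
  have hle : Module.finrank ℝ ↥(U ⊔ V) ≤ n := by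
    have h2 := Submodule.finrank_le (U ⊔ V)
    rwa [finrank_euclideanSpace, Fintype.card_fin] at h2
  have hpos : 0 < Module.finrank ℝ ↥(U ⊓ V) := by omega
  haveI : Nontrivial ↥(U ⊓ V) := Module.finrank_pos_iff.mp hpos
  obtain ⟨x, hx⟩ := exists_ne (0 : ↥(U ⊓ V))
  exact ⟨x, x.2, fun h0 => hx (Subtype.ext h0)⟩

noncomputable def onesE (n : ℕ) : EuclideanSpace ℝ (Fin n) := WithLp.toLp 2 (fun _ => 1)

noncomputable def spanOnes (n : ℕ) : Submodule ℝ (EuclideanSpace ℝ (Fin n)) :=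
  Submodule.span ℝ {onesE n}

lemma onesE_ne_zero {n : ℕ} (hn0 : 0 < n) : onesE n ≠ 0 := by
  intro h
  have h9 := congrArg (fun v : EuclideanSpace ℝ (Fin n) => v ⟨0, hn0⟩) h
  simp [onesE] at h9

lemma finrank_spanOnes {n : ℕ} (hn0 : 0 < n) : Module.finrank ℝ (spanOnes n) = 1 :=
  finrank_span_singleton (onesE_ne_zero hn0)

lemma mem_spanOnes {n : ℕ} {x : EuclideanSpace ℝ (Fin n)} (hx : x ∈ spanOnes n) :
    ∃ c : ℝ, c • onesE n = x := Submodule.mem_span_singleton.mp hx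

/-- Eigenvalue–degree bounds for the Laplacian of a finite simple weighted graph
(`corollary 2` of Farber–et al.): for every `m ∈ {2, …, n}`,
`d_m(G) - Δ(G_{l_m}) ≤ λ_m(G) ≤ d_{m-1}(G) + (m-1) a - δ(G_{s_{m-1}})`. -/
theorem laplacian_eigenvalue_degree_bounds
    {n : ℕ} (hn : 2 ≤ n) (A : Matrix (Fin n) (Fin n) ℝ)
    (hsymm : A.IsSymm) (hnonneg : ∀ u v, 0 ≤ A u v) (hdiag : ∀ v, A v v = 0)
    (σ : Equiv.Perm (Fin n)) (hσ : Monotone (wdeg A ∘ σ))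
    (hL : (lap A).IsHermitian)
    (τ : Equiv.Perm (Fin n)) (hτ : Monotone (hL.eigenvalues ∘ τ)) :
    ∀ (m : ℕ) (hm2 : 2 ≤ m) (hmn : m ≤ n),
      wdeg A (σ ⟨m - 1, by omega⟩) - maxDegTop A σ ⟨m - 1, by omega⟩ ≤
        hL.eigenvalues (τ ⟨m - 1, by omega⟩) ∧
      hL.eigenvalues (τ ⟨m - 1, by omega⟩) ≤
        wdeg A (σ ⟨m - 2, by omega⟩) + ((m : ℝ) - 1) * maxWeight (by omega) A -
          minDegBot A σ ⟨m - 2, by omega⟩ := by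
  intro m hm2 hmn
  have hn0 : 0 < n := by omega
  have hm1n : m - 1 < n := by omega
  have hm2n : m - 2 < n := by omega
  set k1 : Fin n := ⟨m - 1, hm1n⟩ with hk1
  set k2 : Fin n := ⟨m - 2, hm2n⟩ with hk2
  set a : ℝ := maxWeight hn0 A with ha
  have haA : ∀ i j, A i j ≤ a :=
    fun i j => Finset.le_sup' (fun p : Fin n × Fin n => A p.1 p.2) (Finset.mem_univ (i, j))
  have ha0 : 0 ≤ a := (hdiag ⟨0, hn0⟩) ▸ haA ⟨0, hn0⟩ ⟨0, hn0⟩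
  have hsum_pos : ∀ x : EuclideanSpace ℝ (Fin n), x ≠ 0 → 0 < ∑ i, x i ^ 2 := by
    intro x hx0
    have hex : ∃ i, x i ≠ 0 := by
      by_contra hall
      push_neg at hall
      exact hx0 (PiLp.ext fun i => hall i)
    obtain ⟨i0, hi0⟩ := hex
    have h1 : 0 < x i0 ^ 2 := by positivity
    have h2 : x i0 ^ 2 ≤ ∑ i, x i ^ 2 :=
      Finset.single_le_sum (fun i _ => sq_nonneg (x i)) (Finset.mem_univ i0)
    linarith
  constructor
  · -- lower bound
    have hS := (Finset.Ici k1).image σ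
    have hUr : Module.finrank ℝ
        (Submodule.span ℝ (hL.eigenvectorBasis '' ↑((Finset.Iic k1).image τ))) = m := by
      rw [span_eigen_finrank, Finset.card_image_of_injective _ τ.injective, Fin.card_Iic]
      show m - 1 + 1 = m
      omega
    have hVr : n - (m - 1) ≤ Module.finrank ℝ (suppSub ((Finset.Ici k1).image σ)) := by
      have h := suppSub_card_le ((Finset.Ici k1).image σ)
      rwa [Finset.card_image_of_injective _ σ.injective, Fin.card_Ici] at h
    obtain ⟨x, hxUV, hx0⟩ := exists_ne_zero_mem_inf
      (Submodule.span ℝ (hL.eigenvectorBasis '' ↑((Finset.Iic k1).image τ)))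
      (suppSub ((Finset.Ici k1).image σ)) (by omega)
    have hup : x ⬝ᵥ (lap A).mulVec x ≤ hL.eigenvalues (τ k1) * ∑ i, x i ^ 2 := by
      refine rayleigh_le_span hL _ _ ?_ x hxUV.1
      intro i hi
      rw [Finset.mem_image] at hi
      obtain ⟨j, hj, rfl⟩ := hi
      exact hτ (Finset.mem_Iic.mp hj)
    have hdown : (wdeg A (σ k1) - maxDegTop A σ k1) * ∑ i, x i ^ 2
        ≤ x ⬝ᵥ (lap A).mulVec x := by
      refine form_ge A hsymm hnonneg ((Finset.Ici k1).image σ) x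
        (fun i hi => hxUV.2 i hi) _ ?_
      intro i hi
      rw [Finset.mem_image] at hi
      obtain ⟨j, hj, rfl⟩ := hi
      have hwd : wdeg A (σ k1) ≤ wdeg A (σ j) := hσ (Finset.mem_Ici.mp hj)
      have hsum : ∑ j' ∈ (Finset.Ici k1).image σ, A (σ j) j' ≤ maxDegTop A σ k1 := by
        rw [Finset.sum_image (fun u _ v _ h => σ.injective h)]
        exact Finset.le_sup' (fun j0 => ∑ j' ∈ Finset.Ici k1, A (σ j0) (σ j')) hj
      linarith
    have hpos := hsum_pos x hx0
    nlinarith [hup, hdown, hpos]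
  · -- upper bound
    have hTcard : ((Finset.Iic k2).image σ).card = m - 1 := by
      rw [Finset.card_image_of_injective _ σ.injective, Fin.card_Iic]
      show m - 2 + 1 = m - 1
      omega
    have hδwd : minDegBot A σ k2 ≤ wdeg A (σ k2) := by
      have h1 : minDegBot A σ k2 ≤ ∑ j' ∈ Finset.Iic k2, A (σ k2) (σ j') :=
        Finset.inf'_le _ (Finset.mem_Iic.mpr le_rfl)
      have h2 : ∑ j' ∈ Finset.Iic k2, A (σ k2) (σ j')
          = ∑ j' ∈ (Finset.Iic k2).image σ, A (σ k2) j' :=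
        (Finset.sum_image (fun u _ v _ h => σ.injective h)).symm
      have h3 : ∑ j' ∈ (Finset.Iic k2).image σ, A (σ k2) j' ≤ wdeg A (σ k2) :=
        Finset.sum_le_sum_of_subset_of_nonneg (Finset.subset_univ _)
          (fun i _ _ => hnonneg _ i)
      rw [wdeg] at h3 ⊢
      linarith
    have hBv0 : 0 ≤ wdeg A (σ k2) + ((m : ℝ) - 1) * a - minDegBot A σ k2 := by
      have hm1 : (0:ℝ) ≤ (m : ℝ) - 1 := by
        have : (2:ℝ) ≤ (m : ℝ) := by exact_mod_cast hm2
        linarith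
      nlinarith [hδwd, mul_nonneg hm1 ha0]
    -- W
    have hinfbot : suppSub ((Finset.Iic k2).image σ)
        ⊓ spanOnes n = ⊥ := by
      rw [eq_bot_iff]
      rintro x ⟨hx1, hx2⟩
      obtain ⟨c, rfl⟩ := mem_spanOnes hx2
      obtain ⟨i0, hi0⟩ : ∃ i, i ∉ (Finset.Iic k2).image σ := by
        by_contra hcon
        push_neg at hcon
        have hsub : Finset.univ ⊆ (Finset.Iic k2).image σ := fun i _ => hcon i
        have := Finset.card_le_card hsub
        rw [hTcard, Finset.card_univ, Fintype.card_fin] at this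
        omega
      have h0 := hx1 i0 hi0
      have hc : c * 1 = 0 := by simpa [onesE] using h0
      have : c = 0 := by linarith
      rw [this, Submodule.mem_bot, zero_smul]
    have hWr : m ≤ Module.finrank ℝ
        ↥(suppSub ((Finset.Iic k2).image σ)
          ⊔ spanOnes n) := by
      have h2 := Submodule.finrank_sup_add_finrank_inf_eq
        (suppSub ((Finset.Iic k2).image σ))
        (spanOnes n)
      rw [hinfbot, finrank_bot, add_zero] at h2
      rw [finrank_spanOnes hn0] at h2
      have h3 := suppSub_card_le ((Finset.Iic k2).image σ)
      rw [hTcard] at h3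
      omega
    have hUr : Module.finrank ℝ
        (Submodule.span ℝ (hL.eigenvectorBasis '' ↑((Finset.Ici k1).image τ))) = n - (m - 1) := by
      rw [span_eigen_finrank, Finset.card_image_of_injective _ τ.injective, Fin.card_Ici]
    obtain ⟨x, hxUV, hx0⟩ := exists_ne_zero_mem_inf
      (Submodule.span ℝ (hL.eigenvectorBasis '' ↑((Finset.Ici k1).image τ)))
      (suppSub ((Finset.Iic k2).image σ)
        ⊔ spanOnes n)
      (by omega)
    have hlow2 : hL.eigenvalues (τ k1) * ∑ i, x i ^ 2 ≤ x ⬝ᵥ (lap A).mulVec x := by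
      refine rayleigh_ge_span hL _ _ ?_ x hxUV.1
      intro i hi
      rw [Finset.mem_image] at hi
      obtain ⟨j, hj, rfl⟩ := hi
      exact hτ (Finset.mem_Ici.mp hj)
    -- decompose x
    obtain ⟨y, hy, z, hz, hyz⟩ := Submodule.mem_sup.mp hxUV.2
    obtain ⟨c, rfl⟩ := mem_spanOnes hz
    have hxeq : (x : Fin n → ℝ) = fun i => y i + c := by
      funext i
      have h1 : x i = y i + c * 1 := by rw [← hyz]; simp [onesE]
      rw [h1, mul_one]
    have hupper : x ⬝ᵥ (lap A).mulVec x
        ≤ (wdeg A (σ k2) + ((m : ℝ) - 1) * a - minDegBot A σ k2) * ∑ i, x i ^ 2 := by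
      rw [hxeq]
      refine form_upper hn0 A hsymm hnonneg hdiag a haA ((Finset.Iic k2).image σ)
        y hy c _ hBv0 ?_
      intro i hi
      rw [Finset.mem_image] at hi
      obtain ⟨j, hj, rfl⟩ := hi
      have hwd : wdeg A (σ j) ≤ wdeg A (σ k2) := hσ (Finset.mem_Iic.mp hj)
      have hsum : minDegBot A σ k2 ≤ ∑ j' ∈ (Finset.Iic k2).image σ, A (σ j) j' := by
        rw [Finset.sum_image (fun u _ v _ h => σ.injective h)]
        exact Finset.inf'_le (fun j0 => ∑ j' ∈ Finset.Iic k2, A (σ j0) (σ j')) hj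
      have hcard : (((Finset.Iic k2).image σ).card : ℝ) = (m : ℝ) - 1 := by
        rw [hTcard]
        have : ((m - 1 : ℕ) : ℝ) = (m : ℝ) - 1 := by
          push_cast [Nat.cast_sub (by omega : 1 ≤ m)]
          ring
        exact this
      rw [hcard]
      linarith
    have hpos := hsum_pos x hx0
    nlinarith [hlow2, hupper, hpos]
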